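/- Fix t, x₀ ∈ ℂ. Let V ⊆ ℂ × ℂ be open such that for every (x,μ) ∈ V one has x ≠ 0, x ≠ 1 and x ≠ t. Let Φ : ℂ × ℂ → Matrix (Fin 2) (Fin 2) ℂ be twice continuously ℂ-differentiable on V with Φ(x,μ) invertible for all (x,μ) ∈ V, satisfying ∂Φ/∂x(x,μ) = ![![0, 1],![−μ/(x·(x−1)·(x−t)), 0]] · Φ(x,μ) on V and Φ(x₀,μ) equal to the identity matrix for every μ with (x₀,μ) ∈ V. Fix μ ∈ ℂ and let γ : [0,1] → ℂ be continuously differentiable with γ(0) = x₀ and (γ(r), μ) ∈ V for all r ∈ [0,1]. Then ∂Φ/∂μ(γ(1),μ) = −Φ(γ(1),μ) · ∫₀¹ Λ(γ(r)) · γ'(r) / (γ(r)·(γ(r)−1)·(γ(r)−t)) dr, where Λ(y) = Φ(y,μ)⁻¹ · σ₋ · Φ(y,μ). -/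

import Mathlib

/-!
Write `Ψ = ∂_μ Φ`. Since `Φ` is `C²`, the mixed partials commute, so differentiating the system
`∂ₓΦ = A Φ` in `μ` gives `∂ₓΨ = A Ψ + (∂_μ A) Φ` with `∂_μ A = -σ₋ / (x(x-1)(x-t))`. The `A`-terms
cancel in the derivative of `Φ⁻¹Ψ`, which is therefore `-Λ / (x(x-1)(x-t))`. Along `γ` this is a
continuous function of the path parameter, and integrating it from `x₀`, where `Ψ = 0` because
`Φ(x₀, ·) = I`, gives `Φ(γ 1)⁻¹ Ψ(γ 1)`.
-/

/-- Entrywise complex partial derivative with respect to the first variable of a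
matrix-valued function of two complex variables. -/
noncomputable def pdx (F : ℂ × ℂ → Matrix (Fin 2) (Fin 2) ℂ) (p : ℂ × ℂ) :
    Matrix (Fin 2) (Fin 2) ℂ :=
  Matrix.of fun i j => deriv (fun z => F (z, p.2) i j) p.1

/-- Entrywise complex partial derivative with respect to the second variable of a
matrix-valued function of two complex variables. -/
noncomputable def pds (F : ℂ × ℂ → Matrix (Fin 2) (Fin 2) ℂ) (p : ℂ × ℂ) :
    Matrix (Fin 2) (Fin 2) ℂ :=
  Matrix.of fun i j => deriv (fun z => F (p.1, z) i j) p.2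

/-- The matrix σ₋ = ![![0,0],![1,0]]. -/
def sigmaMinus : Matrix (Fin 2) (Fin 2) ℂ := !![0, 0; 1, 0]

open Set Filter Topology
-- The `L∞` operator norm makes square matrices a complete normed algebra, in which inversion is
-- differentiable.
open scoped Matrix.Norms.Operator

namespace Matrix

variable {𝕜 : Type*} [NontriviallyNormedField 𝕜] {m n α : Type*} [Fintype m] [Fintype n]
  [NormedAddCommGroup α] [NormedSpace 𝕜 α]

/-- The operator norm induces the product topology, so the identity is a continuous linear
equivalence to the product space. -/
def linftyOpToPi : Matrix m n α ≃L[𝕜] (m → n → α) where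
  toLinearEquiv := (ofLinearEquiv 𝕜).symm
  continuous_toFun := continuous_id
  continuous_invFun := continuous_id

theorem hasDerivWithinAt_iff {F : 𝕜 → Matrix m n α} {F' : Matrix m n α} {s : Set 𝕜} {x : 𝕜} :
    HasDerivWithinAt F F' s x ↔ ∀ i j, HasDerivWithinAt (fun t => F t i j) (F' i j) s x := by
  constructor
  · intro h i j
    have := (linftyOpToPi (𝕜 := 𝕜)).hasFDerivAt.comp_hasDerivWithinAt x h
    exact hasDerivWithinAt_pi.1 (hasDerivWithinAt_pi.1 this i) j
  · intro h
    have : HasDerivWithinAt (fun t => (fun i j => F t i j : m → n → α)) (fun i j => F' i j) s x :=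
      hasDerivWithinAt_pi.2 fun i => hasDerivWithinAt_pi.2 (h i)
    exact (linftyOpToPi (𝕜 := 𝕜)).symm.hasFDerivAt.comp_hasDerivWithinAt x this

theorem hasDerivAt_iff {F : 𝕜 → Matrix m n α} {F' : Matrix m n α} {x : 𝕜} :
    HasDerivAt F F' x ↔ ∀ i j, HasDerivAt (fun t => F t i j) (F' i j) x :=
  ⟨fun h i j => hasDerivWithinAt_univ.1 (hasDerivWithinAt_iff.1 h.hasDerivWithinAt i j),
    fun h => hasDerivWithinAt_univ.1 (hasDerivWithinAt_iff.2 fun i j => (h i j).hasDerivWithinAt)⟩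

theorem _root_.DifferentiableAt.hasDerivAt_of_deriv_apply {F : 𝕜 → Matrix m n α} {x : 𝕜}
    (hF : DifferentiableAt 𝕜 F x) :
    HasDerivAt F (of fun i j => deriv (fun t => F t i j) x) x :=
  hasDerivAt_iff.2 fun i j => ((hasDerivAt_iff.1 hF.hasDerivAt) i j).differentiableAt.hasDerivAt

theorem contDiffOn_iff {E : Type*} [NormedAddCommGroup E] [NormedSpace 𝕜 E] {F : E → Matrix m n α}
    {s : Set E} {k : WithTop ℕ∞} :
    ContDiffOn 𝕜 k F s ↔ ∀ i j, ContDiffOn 𝕜 k (fun x => F x i j) s := by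
  rw [← (linftyOpToPi (𝕜 := 𝕜)).comp_contDiffOn_iff, contDiffOn_pi]
  simp only [contDiffOn_pi]
  rfl

end Matrix

section Slices

theorem eventually_nhds_slice_fst {X Y : Type*} [TopologicalSpace X] [TopologicalSpace Y]
    {p : X × Y} {P : X × Y → Prop} (h : ∀ᶠ q in 𝓝 p, P q) : ∀ᶠ x in 𝓝 p.1, P (x, p.2) :=
  (continuous_id.prodMk continuous_const).continuousAt.preimage_mem_nhds h

theorem eventually_nhds_slice_snd {X Y : Type*} [TopologicalSpace X] [TopologicalSpace Y]
    {p : X × Y} {P : X × Y → Prop} (h : ∀ᶠ q in 𝓝 p, P q) : ∀ᶠ y in 𝓝 p.2, P (p.1, y) :=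
  (continuous_const.prodMk continuous_id).continuousAt.preimage_mem_nhds h

variable {𝕜 : Type*} [NontriviallyNormedField 𝕜] {E : Type*} [NormedAddCommGroup E]
  [NormedSpace 𝕜 E] {g : 𝕜 × 𝕜 → E} {L : 𝕜 × 𝕜 →L[𝕜] E} {p : 𝕜 × 𝕜}

theorem HasFDerivAt.hasDerivAt_slice_fst (hg : HasFDerivAt g L p) :
    HasDerivAt (fun x => g (x, p.2)) (L (1, 0)) p.1 :=
  hg.comp_hasDerivAt p.1 ((hasDerivAt_id p.1).prodMk (hasDerivAt_const p.1 p.2))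

theorem HasFDerivAt.hasDerivAt_slice_snd (hg : HasFDerivAt g L p) :
    HasDerivAt (fun z => g (p.1, z)) (L (0, 1)) p.2 :=
  hg.comp_hasDerivAt p.2 ((hasDerivAt_const p.2 p.1).prodMk (hasDerivAt_id p.2))

/-- Symmetry of mixed partial derivatives (Schwarz–Clairaut). -/
theorem ContDiffAt.hasDerivAt_deriv_slice_snd {𝕜 : Type*} [RCLike 𝕜] {E : Type*}
    [NormedAddCommGroup E] [NormedSpace 𝕜 E] {g : 𝕜 × 𝕜 → E} {p : 𝕜 × 𝕜}
    (hg : ContDiffAt 𝕜 2 g p) :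
    HasDerivAt (fun x => deriv (fun z => g (x, z)) p.2)
      (deriv (fun z => deriv (fun x => g (x, z)) p.1) p.2) p.1 := by
  set D := fderiv 𝕜 g
  have hdiff : ∀ᶠ q in 𝓝 p, HasFDerivAt g (D q) q :=
    (hg.eventually (by simp)).mono fun q hq =>
      (hq.differentiableAt (by norm_num)).hasFDerivAt
  have hD : HasFDerivAt D (fderiv 𝕜 D p) p :=
    ((hg.fderiv_right (m := 1) le_rfl).differentiableAt one_ne_zero).hasFDerivAt
  have hx : (fun x => deriv (fun z => g (x, z)) p.2) =ᶠ[𝓝 p.1] fun x => D (x, p.2) (0, 1) :=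
    (eventually_nhds_slice_fst hdiff).mono fun x hx => hx.hasDerivAt_slice_snd.deriv
  have hz : (fun z => deriv (fun x => g (x, z)) p.1) =ᶠ[𝓝 p.2] fun z => D (p.1, z) (1, 0) :=
    (eventually_nhds_slice_snd hdiff).mono fun z hz => hz.hasDerivAt_slice_fst.deriv
  have hsymm : fderiv 𝕜 D p (1, 0) (0, 1) = fderiv 𝕜 D p (0, 1) (1, 0) :=
    hg.isSymmSndFDerivAt (by simp [minSmoothness_of_isRCLikeNormedField]) _ _
  have hDx : HasDerivAt (fun x => D (x, p.2) (0, 1)) (fderiv 𝕜 D p (1, 0) (0, 1)) p.1 :=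
    (ContinuousLinearMap.apply 𝕜 E ((0, 1) : 𝕜 × 𝕜)).hasFDerivAt.comp_hasDerivAt p.1
      hD.hasDerivAt_slice_fst
  have hDz : HasDerivAt (fun z => D (p.1, z) (1, 0)) (fderiv 𝕜 D p (0, 1) (1, 0)) p.2 :=
    (ContinuousLinearMap.apply 𝕜 E ((1, 0) : 𝕜 × 𝕜)).hasFDerivAt.comp_hasDerivAt p.2
      hD.hasDerivAt_slice_snd
  rw [hz.deriv_eq, hDz.deriv, ← hsymm]
  exact hDx.congr_of_eventuallyEq hx

end Slices

section VariationOfConstants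

variable {𝕜 : Type*} [NontriviallyNormedField 𝕜] {R : Type*} [NormedRing R] [NormedAlgebra 𝕜 R]
  [HasSummableGeomSeries R] {P Q : 𝕜 → R} {s : Set 𝕜} {x : 𝕜}

theorem HasDerivWithinAt.ringInverse {P' : R} (hP : HasDerivWithinAt P P' s x)
    (hx : IsUnit (P x)) :
    HasDerivWithinAt (fun t => Ring.inverse (P t))
      (-(Ring.inverse (P x) * P' * Ring.inverse (P x))) s x := by
  obtain ⟨u, hu⟩ := hx
  have hinv := hasFDerivAt_ringInverse (𝕜 := 𝕜) u
  have hu' : (↑u⁻¹ : R) = Ring.inverse (P x) := by rw [← hu, Ring.inverse_unit]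
  rw [hu, hu'] at hinv
  simpa [Function.comp_def] using hinv.comp_hasDerivWithinAt x hP

theorem HasDerivWithinAt.ringInverse_mul {A B : R} (hP : HasDerivWithinAt P (A * P x) s x)
    (hQ : HasDerivWithinAt Q (A * Q x + B) s x) (hx : IsUnit (P x)) :
    HasDerivWithinAt (fun t => Ring.inverse (P t) * Q t) (Ring.inverse (P x) * B) s x := by
  refine ((hP.ringInverse hx).mul hQ).congr_deriv ?_
  rw [mul_assoc _ (A * P x), mul_assoc A, Ring.mul_inverse_cancel _ hx, mul_one]
  noncomm_ring

end VariationOfConstants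

namespace Matrix

variable {n 𝕜 : Type*} [Fintype n] [DecidableEq n] [RCLike 𝕜]

theorem eq_mul_integral_of_hasDerivWithinAt {a b : ℝ} (hab : a ≤ b) {P Q A B : ℝ → Matrix n n 𝕜}
    (hP : ∀ r ∈ Icc a b, HasDerivWithinAt P (A r * P r) (Icc a b) r)
    (hQ : ∀ r ∈ Icc a b, HasDerivWithinAt Q (A r * Q r + B r) (Icc a b) r)
    (hunit : ∀ r ∈ Icc a b, IsUnit (P r)) (hB : ContinuousOn B (Icc a b)) (hQa : Q a = 0) :
    Q b = P b * of fun i j => ∫ r in a..b, ((P r)⁻¹ * B r) i j := by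
  simp only [nonsing_inv_eq_ringInverse]
  have hG : ∀ r ∈ Icc a b, HasDerivWithinAt (fun r => Ring.inverse (P r) * Q r)
      (Ring.inverse (P r) * B r) (Icc a b) r := fun r hr =>
    (hP r hr).ringInverse_mul (hQ r hr) (hunit r hr)
  have hPinv : ContinuousOn (fun r => Ring.inverse (P r)) (Icc a b) := fun r hr =>
    ((hP r hr).ringInverse (hunit r hr)).continuousWithinAt
  have hFTC : ∀ i j, ∫ r in a..b, (Ring.inverse (P r) * B r) i j
      = (Ring.inverse (P b) * Q b) i j - (Ring.inverse (P a) * Q a) i j := by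
    intro i j
    have hcont : ContinuousOn (fun r => (Ring.inverse (P r) * B r) i j) (Icc a b) :=
      (continuous_id.matrix_elem i j).comp_continuousOn (hPinv.mul hB)
    exact intervalIntegral.integral_eq_sub_of_hasDeriv_right_of_le hab
      (fun r hr => (hasDerivWithinAt_iff.1 (hG r hr) i j).continuousWithinAt)
      (fun r hr => (hasDerivWithinAt_iff.1 (hG r (Ioo_subset_Icc_self hr)) i j)
        |>.mono_of_mem_nhdsWithin (mem_nhdsWithin_of_mem_nhds (Icc_mem_nhds hr.1 hr.2)))
      (hcont.intervalIntegrable_of_Icc hab)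
  calc Q b = P b * (Ring.inverse (P b) * Q b) :=
        (Ring.mul_inverse_cancel_left _ _ (hunit b (right_mem_Icc.2 hab))).symm
    _ = _ := by
      congr 1
      ext i j
      simp [hFTC, hQa]

end Matrix

section VariationalEquation

variable {𝕜 : Type*} [RCLike 𝕜] {n : Type*} [Fintype n] [DecidableEq n]
  {V : Set (𝕜 × 𝕜)} {Φ A Ψ : 𝕜 × 𝕜 → Matrix n n 𝕜}

theorem hasDerivAt_paramDeriv_of_linearODE (hV : IsOpen V) (hΦ : ContDiffOn 𝕜 2 Φ V)
    (hx : ∀ p ∈ V, HasDerivAt (fun x => Φ (x, p.2)) (A p * Φ p) p.1)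
    (hz : ∀ p ∈ V, HasDerivAt (fun z => Φ (p.1, z)) (Ψ p) p.2) {p : 𝕜 × 𝕜} (hp : p ∈ V)
    {A' : Matrix n n 𝕜} (hA : HasDerivAt (fun z => A (p.1, z)) A' p.2) :
    HasDerivAt (fun x => Ψ (x, p.2)) (A p * Ψ p + A' * Φ p) p.1 := by
  have hVp : ∀ᶠ q in 𝓝 p, q ∈ V := hV.mem_nhds hp
  have hmixed := (hΦ.contDiffAt hVp).hasDerivAt_deriv_slice_snd
  have hΨ : (fun x => Ψ (x, p.2)) =ᶠ[𝓝 p.1] fun x => deriv (fun z => Φ (x, z)) p.2 :=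
    (eventually_nhds_slice_fst hVp).mono fun x hx => (hz _ hx).deriv.symm
  have hAΦ : (fun z => deriv (fun x => Φ (x, z)) p.1) =ᶠ[𝓝 p.2]
      fun z => A (p.1, z) * Φ (p.1, z) :=
    (eventually_nhds_slice_snd hVp).mono fun z hz => (hx _ hz).deriv
  have hvalue : deriv (fun z => deriv (fun x => Φ (x, z)) p.1) p.2 = A p * Ψ p + A' * Φ p :=
    hAΦ.deriv_eq.trans ((hA.mul (hz p hp)).deriv.trans (add_comm _ _))
  exact (hmixed.congr_of_eventuallyEq hΨ).congr_deriv hvalue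

end VariationalEquation

section Heun

variable {Φ : ℂ × ℂ → Matrix (Fin 2) (Fin 2) ℂ} {p : ℂ × ℂ}

theorem DifferentiableAt.hasDerivAt_pdx (hΦ : DifferentiableAt ℂ Φ p) :
    HasDerivAt (fun x => Φ (x, p.2)) (pdx Φ p) p.1 :=
  hΦ.hasFDerivAt.hasDerivAt_slice_fst.differentiableAt.hasDerivAt_of_deriv_apply

theorem DifferentiableAt.hasDerivAt_pds (hΦ : DifferentiableAt ℂ Φ p) :
    HasDerivAt (fun z => Φ (p.1, z)) (pds Φ p) p.2 :=
  hΦ.hasFDerivAt.hasDerivAt_slice_snd.differentiableAt.hasDerivAt_of_deriv_apply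

theorem pds_eq_zero_of_eventually_eq_one (h : ∀ᶠ z in 𝓝 p.2, Φ (p.1, z) = 1) : pds Φ p = 0 := by
  ext i j
  have hij : (fun z => Φ (p.1, z) i j) =ᶠ[𝓝 p.2] fun _ => (1 : Matrix (Fin 2) (Fin 2) ℂ) i j :=
    h.mono fun z hz => congrFun (congrFun hz i) j
  exact hij.deriv_eq.trans (deriv_const _ _)

noncomputable def heunMatrix (t : ℂ) (p : ℂ × ℂ) : Matrix (Fin 2) (Fin 2) ℂ :=
  !![0, 1; -p.2 / (p.1 * (p.1 - 1) * (p.1 - t)), 0]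

theorem hasDerivAt_heunMatrix_snd (t : ℂ) (p : ℂ × ℂ) :
    HasDerivAt (fun z => heunMatrix t (p.1, z))
      (-(p.1 * (p.1 - 1) * (p.1 - t))⁻¹ • sigmaMinus) p.2 := by
  refine Matrix.hasDerivAt_iff.2 fun i j => ?_
  fin_cases i <;> fin_cases j <;>
    simp only [heunMatrix, sigmaMinus, Fin.zero_eta, Fin.mk_one, Fin.isValue, Matrix.of_apply,
      Matrix.cons_val', Matrix.cons_val_zero, Matrix.cons_val_one, Matrix.cons_val_fin_one,
      Matrix.smul_apply, smul_eq_mul, mul_zero, mul_one, hasDerivAt_const]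
  exact ((hasDerivAt_neg p.2).div_const _).congr_deriv (by rw [neg_div, one_div])

theorem hasDerivAt_slice_fst_of_heun {t : ℂ} {V : Set (ℂ × ℂ)} (hV : IsOpen V)
    (hΦ : ContDiffOn ℂ 2 Φ V) (heq : ∀ p ∈ V, pdx Φ p = heunMatrix t p * Φ p) (hp : p ∈ V) :
    HasDerivAt (fun x => Φ (x, p.2)) (heunMatrix t p * Φ p) p.1 ∧
      HasDerivAt (fun x => pds Φ (x, p.2))
        (heunMatrix t p * pds Φ p + (-(p.1 * (p.1 - 1) * (p.1 - t))⁻¹ • sigmaMinus) * Φ p) p.1 := by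
  have hΦd : ∀ q ∈ V, DifferentiableAt ℂ Φ q := fun q hq =>
    (hΦ.contDiffAt (hV.mem_nhds hq)).differentiableAt (by norm_num)
  have hx : ∀ q ∈ V, HasDerivAt (fun x => Φ (x, q.2)) (heunMatrix t q * Φ q) q.1 := fun q hq =>
    heq q hq ▸ (hΦd q hq).hasDerivAt_pdx
  exact ⟨hx p hp, hasDerivAt_paramDeriv_of_linearODE hV hΦ hx
    (fun q hq => (hΦd q hq).hasDerivAt_pds) hp (hasDerivAt_heunMatrix_snd t p)⟩

theorem continuousOn_derivWithin_div_of_ne {γ : ℝ → ℂ} {a b : ℝ} (hab : a < b) {t : ℂ}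
    (hγ : ContDiffOn ℝ 1 γ (Icc a b)) (hγt : ∀ r ∈ Icc a b, γ r ≠ 0 ∧ γ r ≠ 1 ∧ γ r ≠ t) :
    ContinuousOn (fun r => derivWithin γ (Icc a b) r / (γ r * (γ r - 1) * (γ r - t)))
      (Icc a b) := by
  have hγc := hγ.continuousOn
  refine (hγ.continuousOn_derivWithin (uniqueDiffOn_Icc hab) le_rfl).div (by fun_prop) ?_
  intro r hr
  obtain ⟨h0, h1, ht⟩ := hγt r hr
  exact mul_ne_zero (mul_ne_zero h0 (sub_ne_zero.2 h1)) (sub_ne_zero.2 ht)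

end Heun

/-- Variational formula for the `μ`-dependence of the normalized
solution `Φ` (with `Φ(x₀,μ) = I`) of the Wronskian form of the Heun-type equation
`φ'' + μ/(x(x−1)(x−t))·φ = 0`:
`∂Φ/∂μ(γ(1),μ) = −Φ(γ(1),μ)·∫₀¹ Λ(γ(r))·γ'(r)/(γ(r)(γ(r)−1)(γ(r)−t)) dr`, with
`Λ(y) = Φ(y,μ)⁻¹·σ₋·Φ(y,μ)`. -/
theorem heun_variation_in_mu
    (t x₀ : ℂ) (V : Set (ℂ × ℂ)) (hV : IsOpen V)
    (hVreg : ∀ p ∈ V, p.1 ≠ 0 ∧ p.1 ≠ 1 ∧ p.1 ≠ t)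
    (Φ : ℂ × ℂ → Matrix (Fin 2) (Fin 2) ℂ)
    (hΦ : ∀ i j, ContDiffOn ℂ 2 (fun p => Φ p i j) V)
    (hinv : ∀ p ∈ V, IsUnit (Φ p))
    (heq : ∀ p ∈ V,
      pdx Φ p = !![0, 1; -p.2 / (p.1 * (p.1 - 1) * (p.1 - t)), 0] * Φ p)
    (hnorm : ∀ μ : ℂ, (x₀, μ) ∈ V → Φ (x₀, μ) = 1)
    (μ : ℂ) (γ : ℝ → ℂ)
    (hγ : ContDiffOn ℝ 1 γ (Set.Icc 0 1))
    (hγ0 : γ 0 = x₀)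
    (hγV : ∀ r ∈ Set.Icc (0 : ℝ) 1, (γ r, μ) ∈ V) :
    pds Φ (γ 1, μ) =
      -(Φ (γ 1, μ) *
        Matrix.of fun i j =>
          ∫ r in (0 : ℝ)..1,
            ((Φ (γ r, μ))⁻¹ * sigmaMinus * Φ (γ r, μ)) i j *
              derivWithin γ (Set.Icc 0 1) r /
                (γ r * (γ r - 1) * (γ r - t))) := by
  set c : ℂ → ℂ := fun x => x * (x - 1) * (x - t)
  set γ' := derivWithin γ (Icc 0 1)
  have hODE := fun p (hp : p ∈ V) =>
    hasDerivAt_slice_fst_of_heun hV (Matrix.contDiffOn_iff.2 hΦ) heq hp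
  have hγd : ∀ r ∈ Icc (0 : ℝ) 1, HasDerivWithinAt γ (γ' r) (Icc 0 1) r := fun r hr =>
    (hγ.differentiableOn one_ne_zero r hr).hasDerivWithinAt
  have hP : ∀ r ∈ Icc (0 : ℝ) 1, HasDerivWithinAt (fun r => Φ (γ r, μ))
      ((γ' r • heunMatrix t (γ r, μ)) * Φ (γ r, μ)) (Icc 0 1) r := fun r hr =>
    ((hODE _ (hγV r hr)).1.scomp_hasDerivWithinAt r (hγd r hr)).congr_deriv
      (smul_mul_assoc _ _ _).symm
  have hQ : ∀ r ∈ Icc (0 : ℝ) 1, HasDerivWithinAt (fun r => pds Φ (γ r, μ))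
      ((γ' r • heunMatrix t (γ r, μ)) * pds Φ (γ r, μ)
        + (-(γ' r / c (γ r))) • (sigmaMinus * Φ (γ r, μ))) (Icc 0 1) r := fun r hr => by
    refine ((hODE _ (hγV r hr)).2.scomp_hasDerivWithinAt r (hγd r hr)).congr_deriv ?_
    simp only [smul_add, smul_mul_assoc, c]
    module
  have hB : ContinuousOn (fun r => (-(γ' r / c (γ r))) • (sigmaMinus * Φ (γ r, μ))) (Icc 0 1) :=
    (continuousOn_derivWithin_div_of_ne zero_lt_one hγ fun r hr => hVreg _ (hγV r hr)).neg.smul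
      (continuousOn_const.mul fun r hr => (hP r hr).continuousWithinAt)
  have hx₀V : (x₀, μ) ∈ V := hγ0 ▸ hγV 0 (left_mem_Icc.2 zero_le_one)
  have hQ0 : pds Φ (γ 0, μ) = 0 := hγ0 ▸ pds_eq_zero_of_eventually_eq_one
    ((eventually_nhds_slice_snd (hV.mem_nhds hx₀V)).mono fun z hz => hnorm z hz)
  rw [Matrix.eq_mul_integral_of_hasDerivWithinAt zero_le_one hP hQ (fun r hr => hinv _ (hγV r hr))
    hB hQ0, ← mul_neg]
  congr 1
  ext i j
  simp only [Matrix.of_apply, Matrix.neg_apply, ← intervalIntegral.integral_neg]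
  congr 1
  funext r
  rw [Matrix.mul_smul, Matrix.smul_apply, Matrix.mul_assoc, smul_eq_mul]
  ring
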